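/- arXiv:1803.04095 — 6 statements merged into one kernel-verified Lean document; each statement's English description precedes it below -/
import Mathlib

section
/- Let {G_i} be a collection of groups with a common subgroup A, and let H_i ⊆ G_i be subgroups such that the intersection H_i ∩ A equals a fixed subgroup B independent of i. Then the natural homomorphism from the amalgamated free product of the H_i over B to the amalgamated free product of the G_i over A is injective. -/
/-!
Take the normal form `x = b · h₁ ⋯ hₙ` of an element of `∗_B H i`, with `b ∈ B` and every letter
`hₖ` a nontrivial coset representative, so `hₖ ∉ B`. Since `H i ∩ A = B`, the images `f hₖ` are
not in `A`, so `f h₁ ⋯ f hₙ` is a reduced word of `∗_A G i`. By the normal form theorem a reduced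
word whose product lies in `A` is empty; hence `Φ x = 1` forces `n = 0`, and then `b = 1`.
-/

open Function

namespace Monoid

namespace CoprodI.Word

variable {ι : Type*} {M N : ι → Type*} [∀ i, Monoid (M i)] [∀ i, Monoid (N i)]

def map (f : ∀ i, M i →* N i) (hf : ∀ i, Injective (f i)) (w : Word M) : Word N where
  toList := w.toList.map fun l => ⟨l.1, f l.1 l.2⟩
  ne_one := by
    simp only [List.mem_map]
    rintro _ ⟨⟨i, m⟩, hm, rfl⟩
    exact (map_ne_one_iff (f i) (hf i)).2 (w.ne_one _ hm)
  chain_ne := (List.isChain_map _).2 w.chain_ne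

theorem map_eq_empty_iff {f : ∀ i, M i →* N i} {hf : ∀ i, Injective (f i)} {w : Word M} :
    w.map f hf = empty ↔ w = empty := by
  simp only [Word.ext_iff, map, empty, List.map_eq_nil_iff]

end CoprodI.Word

namespace PushoutI

open CoprodI NormalWord

variable {ι : Type*} {G : ι → Type*} [∀ i, Group (G i)] {A : Type*} [Group A]
  {φ : ∀ i, A →* G i}

theorem NormalWord.reduced {d : Transversal φ} (w : NormalWord d) : Reduced φ w.toWord := by
  rintro ⟨i, g⟩ hg hrange
  have hT := (d.compl i).equiv_snd_eq_self_of_mem_of_one_mem (one_mem _) (w.normalized i g hg)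
  rw [(d.compl i).equiv_snd_eq_one_of_mem_of_one_mem (d.one_mem i) hrange] at hT
  exact w.ne_one _ hg (congrArg Subtype.val hT).symm

variable {H : ι → Type*} [∀ i, Group (H i)] {B : Type*} [Group B] {ψ : ∀ i, B →* H i}
  {f : ∀ i, H i →* G i}

theorem Reduced.map (hf : ∀ i, Injective (f i)) {w : Word H} (hw : Reduced ψ w)
    (hrange : ∀ i, (φ i).range.comap (f i) ≤ (ψ i).range) :
    Reduced φ (w.map f hf) := by
  simp only [Reduced, Word.map, List.mem_map]
  rintro _ ⟨⟨i, h⟩, hh, rfl⟩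
  exact fun hfh => hw _ hh (hrange i hfh)

theorem map_ofCoprodI_prod (hf : ∀ i, Injective (f i)) {Φ : PushoutI ψ →* PushoutI φ}
    (hΦ : ∀ i (h : H i), Φ (of i h) = of i (f i h)) (w : Word H) :
    Φ (ofCoprodI w.prod) = ofCoprodI (w.map f hf).prod := by
  simp only [Word.prod, Word.map, map_list_prod, List.map_map]
  congr 1
  refine List.map_congr_left fun l _ => ?_
  simp [ofCoprodI_of, hΦ]

theorem injective_of_comap_range_le (hf : ∀ i, Injective (f i)) (hφ : ∀ i, Injective (φ i))
    (hψ : ∀ i, Injective (ψ i)) {j : B →* A} (hj : Injective j)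
    (hrange : ∀ i, (φ i).range.comap (f i) ≤ (ψ i).range)
    {Φ : PushoutI ψ →* PushoutI φ} (hΦof : ∀ i (h : H i), Φ (of i h) = of i (f i h))
    (hΦbase : ∀ b, Φ (base ψ b) = base φ (j b)) :
    Injective Φ := by
  classical
  obtain ⟨d⟩ := transversal_nonempty ψ hψ
  rw [injective_iff_map_eq_one]
  intro x hx
  obtain ⟨w, rfl⟩ : ∃ w : NormalWord d, w.prod = x := ⟨equiv x, equiv.symm_apply_apply x⟩
  rw [NormalWord.prod, map_mul, hΦbase, map_ofCoprodI_prod hf hΦof] at hx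
  have hmapped : w.toWord.map f hf = .empty :=
    (w.reduced.map hf hrange).eq_empty_of_mem_range hφ
      ⟨(j w.head)⁻¹, by rw [map_inv]; exact inv_eq_of_mul_eq_one_right hx⟩
  have hempty : w.toWord = .empty := Word.map_eq_empty_iff.1 hmapped
  rw [hmapped, Word.prod_empty, map_one, mul_one] at hx
  have hhead : w.head = 1 := hj (base_injective hφ (by rw [hx, map_one, map_one]))
  rw [NormalWord.prod, hempty, hhead, Word.prod_empty, map_one, map_one, one_mul]

end PushoutI

end Monoid

theorem MonoidHom.comap_range_le_range {H G A B : Type*} [Group H] [Group G] [Group A] [Group B]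
    {f : H →* G} (hf : Injective f) {incA : A →* G} {incB : B →* H} {j : B →* A}
    (hsquare : f.comp incB = incA.comp j) (hinter : f.range ⊓ incA.range ≤ (incA.comp j).range) :
    incA.range.comap f ≤ incB.range := by
  intro h hh
  obtain ⟨b, hb⟩ : f h ∈ (incA.comp j).range := hinter ⟨⟨h, rfl⟩, hh⟩
  exact ⟨b, hf (by rw [← hb, ← MonoidHom.comp_apply, hsquare])⟩

/-- Serre. Let `{G i}` be a collection of groups with a common subgroup `A`
(given by injections `incA i : A →* G i`), and let `H i ⊆ G i` be subgroups (given by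
injections `f i : H i →* G i`) such that the intersection `H i ∩ A` equals a fixed subgroup
`B` (given by `j : B →* A` and `incB i : B →* H i`, with commuting squares), independently
of `i`.  Then the natural homomorphism `∗_B H i →* ∗_A G i` of amalgamated free products
is injective. -/
theorem stmt_1 {ι : Type} {A B : Type} [Group A] [Group B]
    (G : ι → Type) [∀ i, Group (G i)]
    (H : ι → Type) [∀ i, Group (H i)]
    (incA : ∀ i, A →* G i) (hincA : ∀ i, Function.Injective (incA i))
    (incB : ∀ i, B →* H i) (hincB : ∀ i, Function.Injective (incB i))
    (j : B →* A) (hj : Function.Injective j)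
    (f : ∀ i, H i →* G i) (hf : ∀ i, Function.Injective (f i))
    -- the square `B → H i → G i` equals `B → A → G i`
    (hsquare : ∀ i, (f i).comp (incB i) = (incA i).comp j)
    -- `H i ∩ A = B` inside `G i`
    (hinter : ∀ i, (f i).range ⊓ (incA i).range = ((incA i).comp j).range)
    -- `Φ` is the natural homomorphism `∗_B H i →* ∗_A G i`
    (Φ : Monoid.PushoutI incB →* Monoid.PushoutI incA)
    (hΦof : ∀ (i : ι) (h : H i),
      Φ (Monoid.PushoutI.of (φ := incB) i h) = Monoid.PushoutI.of (φ := incA) i (f i h))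
    (hΦbase : ∀ b : B,
      Φ (Monoid.PushoutI.base incB b) = Monoid.PushoutI.base incA (j b)) :
    Function.Injective Φ :=
  Monoid.PushoutI.injective_of_comap_range_le hf hincA hincB hj
    (fun i => MonoidHom.comap_range_le_range (hf i) (hsquare i) (hinter i).le) hΦof hΦbase
end

section
/- Let L be a finite flag simplicial complex with vertex set V and let {G_v}_{v∈V} be nontrivial groups. For any full subcomplex L' of L, the natural homomorphism from the graph product of the {G_v} over L' to the graph product over L is injective. -/
/-- An abstract simplicial complex on a vertex type `V`. -/
structure AbstractComplex (V : Type*) where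
  faces : Set (Finset V)
  nonempty_of_mem : ∀ {s : Finset V}, s ∈ faces → s.Nonempty
  down_closed : ∀ {s t : Finset V}, s ∈ faces → t ⊆ s → t.Nonempty → t ∈ faces

/-- The edge (adjacency) relation of the 1-skeleton of `L`. -/
def adjOf {V : Type*} [DecidableEq V] (L : AbstractComplex V) (v w : V) : Prop :=
  v ≠ w ∧ ({v, w} : Finset V) ∈ L.faces

open scoped commutatorElement

/-- The graph product of the groups `G v` over the simplicial graph `adj`: the quotient of
the free product of the `G v` by the relations that `G v` and `G w` commute whenever
`adj v w`. -/
abbrev graphProduct {V : Type*} (adj : V → V → Prop) (G : V → Type*)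
    [∀ v, Group (G v)] : Type _ :=
  Monoid.CoprodI G ⧸ Subgroup.normalClosure
    {x | ∃ (v w : V) (_ : adj v w) (a : G v) (b : G w),
      x = ⁅Monoid.CoprodI.of a, Monoid.CoprodI.of b⁆}

/-- The canonical map from a vertex group to the graph product. -/
def graphProductOf {V : Type*} (adj : V → V → Prop) (G : V → Type*)
    [∀ v, Group (G v)] (v : V) : G v →* graphProduct adj G :=
  (QuotientGroup.mk' _).comp Monoid.CoprodI.of

/-- Let `L` be a finite flag simplicial complex with vertex set `V` and
`{G v}` nontrivial groups.  For any full subcomplex `L'` of `L` (spanned by a vertex set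
`S`), the natural homomorphism from the graph product over `L'` to the graph product over
`L` is injective. -/
theorem stmt_2 {V : Type} [Fintype V] [DecidableEq V]
    (L : AbstractComplex V)
    (hvert : ∀ v : V, ({v} : Finset V) ∈ L.faces)
    (hflag : ∀ s : Finset V, s.Nonempty →
      (∀ v ∈ s, ∀ w ∈ s, v ≠ w → ({v, w} : Finset V) ∈ L.faces) → s ∈ L.faces)
    (G : V → Type) [∀ v, Group (G v)] [∀ v, Nontrivial (G v)]
    (S : Set V)  -- the vertex set spanning the full subcomplex `L'`
    (φ : graphProduct (fun a b : S => adjOf L a.1 b.1) (fun a : S => G a.1) →*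
      graphProduct (adjOf L) G)
    (hφ : ∀ (a : S) (g : G a.1),
      φ (graphProductOf (fun a b : S => adjOf L a.1 b.1) (fun a : S => G a.1) a g) =
        graphProductOf (adjOf L) G a.1 g) :
    Function.Injective φ := by
  classical
  let NS := Subgroup.normalClosure
    {x : Monoid.CoprodI (fun a : S => G a.1) | ∃ (v w : S)
      (_ : (fun a b : S => adjOf L a.1 b.1) v w)
      (a : (fun a : S => G a.1) v) (b : (fun a : S => G a.1) w),
      x = ⁅Monoid.CoprodI.of (M := fun a : S => G a.1) a,
            Monoid.CoprodI.of (M := fun a : S => G a.1) b⁆}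
  let f : ∀ v : V, G v →* graphProduct (fun a b : S => adjOf L a.1 b.1) (fun a : S => G a.1) :=
    fun v => if h : v ∈ S then
      graphProductOf (fun a b : S => adjOf L a.1 b.1) (fun a : S => G a.1) ⟨v, h⟩ else 1
  let rt : Monoid.CoprodI G →*
      graphProduct (fun a b : S => adjOf L a.1 b.1) (fun a : S => G a.1) :=
    Monoid.CoprodI.lift f
  have hrel : {x | ∃ (v w : V) (_ : adjOf L v w) (a : G v) (b : G w),
      x = ⁅Monoid.CoprodI.of a, Monoid.CoprodI.of b⁆} ⊆ (rt.ker : Set (Monoid.CoprodI G)) := by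
    rintro x ⟨v, w, hvw, a, b, rfl⟩
    simp only [SetLike.mem_coe, MonoidHom.mem_ker, map_commutatorElement,
      Monoid.CoprodI.lift_of, rt]
    by_cases hv : v ∈ S
    · by_cases hw : w ∈ S
      · simp only [f, dif_pos hv, dif_pos hw]
        have h1 : ((QuotientGroup.mk' NS)
            ⁅Monoid.CoprodI.of (M := fun a : S => G a.1) (i := ⟨v, hv⟩) a,
              Monoid.CoprodI.of (M := fun a : S => G a.1) (i := ⟨w, hw⟩) b⁆ :
            graphProduct (fun a b : S => adjOf L a.1 b.1) (fun a : S => G a.1)) = 1 := by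
          rw [QuotientGroup.mk'_apply, QuotientGroup.eq_one_iff]
          apply Subgroup.subset_normalClosure
          exact ⟨⟨v, hv⟩, ⟨w, hw⟩, hvw, a, b, rfl⟩
        exact h1
      · simp [f, dif_neg hw]
    · simp [f, dif_neg hv]
  have hN : Subgroup.normalClosure {x | ∃ (v w : V) (_ : adjOf L v w) (a : G v) (b : G w),
      x = ⁅Monoid.CoprodI.of a, Monoid.CoprodI.of b⁆} ≤ rt.ker :=
    Subgroup.normalClosure_le_normal hrel
  let r : graphProduct (adjOf L) G →*
      graphProduct (fun a b : S => adjOf L a.1 b.1) (fun a : S => G a.1) :=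
    QuotientGroup.lift _ rt hN
  have key : ∀ x, r (φ x) = x := by
    have hhom : ((r.comp φ).comp (QuotientGroup.mk' NS) :
        Monoid.CoprodI (fun a : S => G a.1) →* _) = (QuotientGroup.mk' NS) := by
      apply Monoid.CoprodI.ext_hom
      intro a
      ext g
      simp only [MonoidHom.comp_apply]
      have h1 : (QuotientGroup.mk' NS) (Monoid.CoprodI.of g) =
          graphProductOf (fun a b : S => adjOf L a.1 b.1) (fun a : S => G a.1) a g := rfl
      rw [h1, hφ a g]
      have h2 : r (graphProductOf (adjOf L) G a.1 g) = rt (Monoid.CoprodI.of g) := rfl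
      rw [h2, Monoid.CoprodI.lift_of]
      simp only [f, dif_pos a.2, h1]
    intro x
    obtain ⟨y, rfl⟩ := QuotientGroup.mk'_surjective NS x
    exact DFunLike.congr_fun hhom y
  intro x y h
  have h2 := congrArg r h
  rwa [key, key] at h2
end

section
/- Let λ(t) = (t, t², …, t^n) be the moment curve in ℝ^n, and let f be the general position map sending the i-th vertex of a simplicial complex K (in a fixed total order) to λ(i) and extending affinely. Suppose σ and τ are disjoint simplices of K with dim σ + dim τ = n. Then f(σ) and f(τ) intersect if and only if σ and τ are meshed, i.e., the vertices of σ and τ strictly alternate in the total order: v₀ < w₀ < v₁ < w₁ < ⋯, where v_i are the vertices of one simplex and w_i of the other. -/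
/-- The moment curve `λ(t) = (t, t², …, tⁿ)` in `ℝⁿ`, evaluated at the natural number
parameter `i`. -/
def momentCurve (n : ℕ) (i : ℕ) : Fin n → ℝ := fun j => (i : ℝ) ^ ((j : ℕ) + 1)

/-- Two finite vertex sets (simplices) `σ`, `τ` of a complex whose vertices are totally
ordered are *meshed* if their vertices strictly alternate in the order, i.e. the merged
sorted sequence alternates between vertices of `σ` and vertices of `τ`:
`v₀ < w₀ < v₁ < w₁ < ⋯`. -/
def Meshed (σ τ : Finset ℕ) : Prop :=
  (∀ x ∈ σ, ∀ y ∈ σ, x < y → ∃ z ∈ τ, x < z ∧ z < y) ∧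
    (∀ x ∈ τ, ∀ y ∈ τ, x < y → ∃ z ∈ σ, x < z ∧ z < y)


open Polynomial Finset

lemma prod_pos_iff_even {α : Type*} [DecidableEq α] (s : Finset α) (f : α → ℝ)
    (h : ∀ i ∈ s, f i ≠ 0) :
    (0 < ∏ i ∈ s, f i ↔ Even (s.filter (fun i => f i < 0)).card) := by
  induction s using Finset.cons_induction with
  | empty => simp
  | cons a s ha ih =>
    have hfa : f a ≠ 0 := h a (Finset.mem_cons_self a s)
    have ih' := ih (fun i hi => h i (Finset.mem_cons_of_mem hi))
    have hPne : (∏ i ∈ s, f i) ≠ 0 :=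
      Finset.prod_ne_zero_iff.2 (fun i hi => h i (Finset.mem_cons_of_mem hi))
    rw [Finset.prod_cons, Finset.filter_cons]
    rcases lt_or_gt_of_ne hfa with hneg | hpos
    · simp only [hneg, if_pos]
      rw [Finset.card_cons, Nat.even_add_one]
      constructor
      · intro hp
        have : ∏ i ∈ s, f i < 0 := by
          rcases hPne.lt_or_gt with h1 | h1
          · exact h1
          · nlinarith
        intro hev
        have := ih'.2 hev
        linarith
      · intro hodd
        have : ¬ (0 < ∏ i ∈ s, f i) := fun hp => hodd (ih'.1 hp)
        have hP : ∏ i ∈ s, f i < 0 := hPne.lt_or_gt.resolve_right this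
        nlinarith
    · simp only [not_lt_of_gt hpos, if_neg, not_false_iff]
      rw [← ih']
      constructor
      · intro hp
        rcases hPne.lt_or_gt with h1 | h1
        · nlinarith
        · exact h1
      · intro hp; positivity

lemma meshed_no_sep {n : ℕ} {σ τ : Finset ℕ} (hdisj : Disjoint σ τ)
    (hU : (σ ∪ τ).card = n + 2) (hm : Meshed σ τ) (P : Polynomial ℝ)
    (hdeg : P.natDegree ≤ n)
    (hσP : ∀ m ∈ σ, P.eval (m : ℝ) < 0) (hτP : ∀ m ∈ τ, 0 < P.eval (m : ℝ)) : False := by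
  classical
  set U := σ ∪ τ with hUdef
  let L := U.orderIsoOfFin hU
  set e : Fin (n + 2) → ℕ := fun i => (L i : ℕ) with he
  have hemono : StrictMono e := fun i j hij => by
    exact_mod_cast Subtype.coe_lt_coe.2 (L.strictMono hij)
  have hemem : ∀ i, e i ∈ U := fun i => (L i).2
  have hcases : ∀ i, (e i ∈ σ ∧ e i ∉ τ) ∨ (e i ∈ τ ∧ e i ∉ σ) := by
    intro i
    have := hemem i
    rw [hUdef, Finset.mem_union] at this
    rcases this with h | h
    · exact Or.inl ⟨h, fun ht => (Finset.disjoint_left.1 hdisj h) ht⟩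
    · exact Or.inr ⟨h, fun hs => (Finset.disjoint_left.1 hdisj hs) h⟩
  have hcons : ∀ (i : Fin (n + 1)) (z : ℕ), z ∈ U →
      ¬(e i.castSucc < z ∧ z < e i.succ) := by
    rintro i z hz ⟨h1, h2⟩
    obtain ⟨j, hj⟩ := L.surjective ⟨z, hz⟩
    have hjz : e j = z := congrArg Subtype.val hj
    rw [← hjz] at h1 h2
    have hij1 : i.castSucc < j := hemono.lt_iff_lt.1 h1
    have hij2 : j < i.succ := hemono.lt_iff_lt.1 h2
    rw [Fin.lt_def] at hij1 hij2
    simp [Fin.coe_castSucc, Fin.val_succ] at hij1 hij2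
    omega
  have hlt : ∀ i : Fin (n + 1), e i.castSucc < e i.succ :=
    fun i => hemono Fin.castSucc_lt_succ
  have halt : ∀ i : Fin (n + 1),
      P.eval (e i.castSucc : ℝ) * P.eval (e i.succ : ℝ) < 0 := by
    intro i
    rcases hcases i.castSucc with ⟨h1, h1'⟩ | ⟨h1, h1'⟩ <;>
      rcases hcases i.succ with ⟨h2, h2'⟩ | ⟨h2, h2'⟩
    · obtain ⟨z, hzτ, hz1, hz2⟩ := hm.1 _ h1 _ h2 (hlt i)
      exact absurd ⟨hz1, hz2⟩ (hcons i z (Finset.mem_union_right _ hzτ))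
    · exact mul_neg_of_neg_of_pos (hσP _ h1) (hτP _ h2)
    · exact mul_neg_of_pos_of_neg (hτP _ h1) (hσP _ h2)
    · obtain ⟨z, hzσ, hz1, hz2⟩ := hm.2 _ h1 _ h2 (hlt i)
      exact absurd ⟨hz1, hz2⟩ (hcons i z (Finset.mem_union_left _ hzσ))
  have hroot : ∀ i : Fin (n + 1), ∃ r : ℝ,
      ((e i.castSucc : ℝ) < r ∧ r < (e i.succ : ℝ)) ∧ P.eval r = 0 := by
    intro i
    have hle : ((e i.castSucc : ℕ) : ℝ) ≤ ((e i.succ : ℕ) : ℝ) := by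
      exact_mod_cast (hlt i).le
    have hcont : ContinuousOn (fun x : ℝ => P.eval x)
        (Set.Icc (e i.castSucc : ℝ) (e i.succ : ℝ)) :=
      P.continuous_aeval.continuousOn
    have := halt i
    rcases lt_or_gt_of_ne (fun h : P.eval (e i.castSucc : ℝ) = 0 => by
        rw [h] at this; simp at this) with hneg | hpos
    · have hpos2 : 0 < P.eval (e i.succ : ℝ) := by nlinarith
      have h0 : (0 : ℝ) ∈ Set.Ioo (P.eval (e i.castSucc : ℝ)) (P.eval (e i.succ : ℝ)) :=
        ⟨hneg, hpos2⟩
      obtain ⟨r, hr, hr0⟩ := intermediate_value_Ioo hle hcont h0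
      exact ⟨r, ⟨hr.1, hr.2⟩, hr0⟩
    · have hneg2 : P.eval (e i.succ : ℝ) < 0 := by nlinarith
      have h0 : (0 : ℝ) ∈ Set.Ioo (P.eval (e i.succ : ℝ)) (P.eval (e i.castSucc : ℝ)) :=
        ⟨hneg2, hpos⟩
      obtain ⟨r, hr, hr0⟩ := intermediate_value_Ioo' hle hcont h0
      exact ⟨r, ⟨hr.1, hr.2⟩, hr0⟩
  choose r hr hr0 using hroot
  have hrmono : StrictMono r := by
    intro i j hij
    have h1 : r i < (e i.succ : ℝ) := (hr i).2
    have h2 : ((e j.castSucc : ℕ) : ℝ) < r j := (hr j).1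
    have h3 : e i.succ ≤ e j.castSucc := by
      apply hemono.monotone
      rw [Fin.le_def]
      simp [Fin.val_succ, Fin.coe_castSucc]
      omega
    have : ((e i.succ : ℕ) : ℝ) ≤ ((e j.castSucc : ℕ) : ℝ) := by exact_mod_cast h3
    linarith
  have hP0 : P ≠ 0 := by
    intro h
    have := halt 0
    rw [h] at this
    simp at this
  have hsub : Finset.image r Finset.univ ⊆ P.roots.toFinset := by
    intro x hx
    obtain ⟨i, _, rfl⟩ := Finset.mem_image.1 hx
    rw [Multiset.mem_toFinset, Polynomial.mem_roots hP0]
    exact hr0 i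
  have hcard1 : (Finset.image r Finset.univ).card = n + 1 := by
    rw [Finset.card_image_of_injective _ hrmono.injective, Finset.card_univ, Fintype.card_fin]
  have : n + 1 ≤ P.natDegree := by
    calc n + 1 = (Finset.image r Finset.univ).card := hcard1.symm
    _ ≤ P.roots.toFinset.card := Finset.card_le_card hsub
    _ ≤ Multiset.card P.roots := Multiset.toFinset_card_le _
    _ ≤ P.natDegree := P.card_roots' 
  omega

set_option maxHeartbeats 2000000 in
lemma not_meshed_sep {n : ℕ} {σ τ : Finset ℕ} (hdisj : Disjoint σ τ)
    (hU : (σ ∪ τ).card = n + 2) (hm : ¬ Meshed σ τ) :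
    ∃ P : Polynomial ℝ, P.natDegree ≤ n ∧ (∀ m ∈ σ, 0 < P.eval (m : ℝ)) ∧
      (∀ m ∈ τ, P.eval (m : ℝ) < 0) := by
  classical
  set U := σ ∪ τ with hUdef
  let L := U.orderIsoOfFin hU
  set e : Fin (n + 2) → ℕ := fun i => (L i : ℕ) with he
  have hemono : StrictMono e := fun i j hij => by
    exact_mod_cast Subtype.coe_lt_coe.2 (L.strictMono hij)
  have hemem : ∀ i, e i ∈ U := fun i => (L i).2
  have hsurj : ∀ z ∈ U, ∃ i, e i = z := by
    intro z hz
    obtain ⟨j, hj⟩ := L.surjective ⟨z, hz⟩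
    exact ⟨j, congrArg Subtype.val hj⟩
  have hcases : ∀ i, (e i ∈ σ ∧ e i ∉ τ) ∨ (e i ∈ τ ∧ e i ∉ σ) := by
    intro i
    have := hemem i
    rw [hUdef, Finset.mem_union] at this
    rcases this with h | h
    · exact Or.inl ⟨h, fun ht => (Finset.disjoint_left.1 hdisj h) ht⟩
    · exact Or.inr ⟨h, fun hs => (Finset.disjoint_left.1 hdisj hs) h⟩
  have hlt : ∀ i : Fin (n + 1), e i.castSucc < e i.succ :=
    fun i => hemono Fin.castSucc_lt_succ
  -- the condition set
  set Cset : Finset (Fin (n + 1)) :=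
    Finset.univ.filter (fun i => ¬ (e i.castSucc ∈ σ ↔ e i.succ ∈ σ)) with hCset
  -- roots
  set ρ : Fin (n + 1) → ℝ := fun i => ((e i.castSucc : ℝ) + (e i.succ : ℝ)) / 2 with hρ
  have hρlt : ∀ i, (e i.castSucc : ℝ) < ρ i ∧ ρ i < (e i.succ : ℝ) := by
    intro i
    have : ((e i.castSucc : ℕ) : ℝ) < ((e i.succ : ℕ) : ℝ) := by exact_mod_cast hlt i
    constructor <;> (rw [hρ]; dsimp only; linarith)
  set P : Polynomial ℝ := ∏ i ∈ Cset, (X - C (ρ i)) with hP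
  have hPdeg : P.natDegree ≤ Cset.card := by
    calc P.natDegree ≤ ∑ i ∈ Cset, (X - C (ρ i)).natDegree := Polynomial.natDegree_prod_le _ _
    _ = ∑ i ∈ Cset, 1 := by
        apply Finset.sum_congr rfl
        intro i _
        exact Polynomial.natDegree_X_sub_C (ρ i)
    _ = Cset.card := by rw [Finset.sum_const, smul_eq_mul, mul_one]
  have hPeval : ∀ k : Fin (n + 2), P.eval (e k : ℝ) = ∏ i ∈ Cset, ((e k : ℝ) - ρ i) := by
    intro k
    rw [hP, Polynomial.eval_prod]
    apply Finset.prod_congr rfl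
    intro i _
    simp
  -- factor signs
  have hfac_pos : ∀ (k : Fin (n + 2)) (i : Fin (n + 1)), (i : ℕ) < (k : ℕ) →
      0 < (e k : ℝ) - ρ i := by
    intro k i hik
    have h1 : e i.succ ≤ e k := by
      apply hemono.monotone
      rw [Fin.le_def]; simp [Fin.val_succ]; omega
    have h2 : ((e i.succ : ℕ) : ℝ) ≤ ((e k : ℕ) : ℝ) := by exact_mod_cast h1
    have := (hρlt i).2
    linarith
  have hfac_neg : ∀ (k : Fin (n + 2)) (i : Fin (n + 1)), (k : ℕ) ≤ (i : ℕ) →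
      (e k : ℝ) - ρ i < 0 := by
    intro k i hik
    have h1 : e k ≤ e i.castSucc := by
      apply hemono.monotone
      rw [Fin.le_def]; simp [Fin.coe_castSucc]; omega
    have h2 : ((e k : ℕ) : ℝ) ≤ ((e i.castSucc : ℕ) : ℝ) := by exact_mod_cast h1
    have := (hρlt i).1
    linarith
  have hfac_ne : ∀ (k : Fin (n + 2)) (i : Fin (n + 1)), (e k : ℝ) - ρ i ≠ 0 := by
    intro k i
    rcases lt_or_ge (i : ℕ) (k : ℕ) with h | h
    · exact ne_of_gt (hfac_pos k i h)
    · exact ne_of_lt (hfac_neg k i h)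
  have hPne : ∀ k : Fin (n + 2), P.eval (e k : ℝ) ≠ 0 := by
    intro k
    rw [hPeval k]
    exact Finset.prod_ne_zero_iff.2 (fun i _ => hfac_ne k i)
  -- sign of P at e k
  set N : ℕ → ℕ := fun k => ((Cset.filter (fun i : Fin (n + 1) => k ≤ (i : ℕ))).card) with hN
  have hfilter : ∀ k : Fin (n + 2), Cset.filter (fun i => (e k : ℝ) - ρ i < 0)
      = Cset.filter (fun i : Fin (n + 1) => (k : ℕ) ≤ (i : ℕ)) := by
    intro k
    apply Finset.filter_congr
    intro i _
    constructor
    · intro hlt0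
      by_contra hc
      push_neg at hc
      exact absurd (hfac_pos k i hc) (by linarith)
    · intro hle
      exact hfac_neg k i hle
  have hPsign : ∀ k : Fin (n + 2), (0 < P.eval (e k : ℝ) ↔ Even (N (k : ℕ))) := by
    intro k
    rw [hPeval k, prod_pos_iff_even Cset _ (fun i _ => hfac_ne k i), hfilter k]
  -- step relation for N
  have hNstep : ∀ i : Fin (n + 1), N (i : ℕ) =
      N ((i : ℕ) + 1) + (if i ∈ Cset then 1 else 0) := by
    intro i
    have hsplit : Cset.filter (fun j : Fin (n + 1) => (i : ℕ) ≤ (j : ℕ))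
        = (Cset.filter (fun j : Fin (n + 1) => (i : ℕ) + 1 ≤ (j : ℕ)))
          ∪ (Cset.filter (fun j => j = i)) := by
      ext j
      simp only [Finset.mem_filter, Finset.mem_union]
      constructor
      · rintro ⟨hj, hle⟩
        rcases eq_or_ne j i with rfl | hne
        · exact Or.inr ⟨hj, rfl⟩
        · left
          refine ⟨hj, ?_⟩
          have : (j : ℕ) ≠ (i : ℕ) := fun h => hne (Fin.ext h)
          omega
      · rintro (⟨hj, hle⟩ | ⟨hj, rfl⟩)
        · exact ⟨hj, by omega⟩
        · exact ⟨hj, le_refl _⟩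
    have hdisj2 : Disjoint (Cset.filter (fun j : Fin (n + 1) => (i : ℕ) + 1 ≤ (j : ℕ)))
        (Cset.filter (fun j => j = i)) := by
      rw [Finset.disjoint_left]
      rintro j hj1 hj2
      simp only [Finset.mem_filter] at hj1 hj2
      rcases hj2 with ⟨_, rfl⟩
      omega
    have heq : (Cset.filter (fun j : Fin (n + 1) => j = i))
        = if i ∈ Cset then {i} else ∅ := Finset.filter_eq' _ _
    show (Cset.filter (fun j : Fin (n + 1) => (i : ℕ) ≤ (j : ℕ))).card = _
    rw [hsplit, Finset.card_union_of_disjoint hdisj2, heq]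
    split <;> simp [hN]
  -- parity claim
  have hparity : ∀ k : Fin (n + 2),
      (Even (N (k : ℕ)) ↔ (e k ∈ σ ↔ e (Fin.last (n + 1)) ∈ σ)) := by
    intro k
    induction k using Fin.reverseInduction with
    | last =>
      have h0 : N ((Fin.last (n + 1) : Fin (n + 2)) : ℕ) = 0 := by
        show (Cset.filter (fun j : Fin (n + 1) => _ ≤ (j : ℕ))).card = 0
        rw [Finset.card_eq_zero]
        apply Finset.filter_false_of_mem
        intro j _
        simp only [Fin.val_last]
        omega
      rw [h0]
      simp
    | cast i ih =>
      have hstep := hNstep i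
      have hcoe1 : ((i.castSucc : Fin (n + 2)) : ℕ) = (i : ℕ) := rfl
      have hcoe2 : ((i.succ : Fin (n + 2)) : ℕ) = (i : ℕ) + 1 := rfl
      rw [hcoe1, hstep]
      have hmem : i ∈ Cset ↔ ¬ (e i.castSucc ∈ σ ↔ e i.succ ∈ σ) := by
        rw [hCset, Finset.mem_filter]
        simp
      rw [hcoe2] at ih
      by_cases hc : i ∈ Cset
      · rw [if_pos hc]
        rw [hmem] at hc
        rw [Nat.even_add_one]
        constructor
        · intro hodd
          have := (not_iff_not.2 ih).1 hodd
          tauto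
        · intro hiff
          intro hev
          exact hc (by tauto)
      · rw [if_neg hc, add_zero]
        rw [hmem] at hc
        push_neg at hc
        rw [ih]
        tauto
  -- a witness index outside Cset, from ¬Meshed
  have hwit : ∃ i0 : Fin (n + 1), i0 ∉ Cset := by
    rcases not_and_or.1 hm with h | h
    · push_neg at h
      obtain ⟨x, hx, y, hy, hxy, hno⟩ := h
      obtain ⟨a, rfl⟩ := hsurj x (Finset.mem_union_left _ hx)
      obtain ⟨b, rfl⟩ := hsurj y (Finset.mem_union_left _ hy)
      have hab : (a : ℕ) < (b : ℕ) := by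
        have := hemono.lt_iff_lt.1 hxy
        rwa [Fin.lt_def] at this
      have han : (a : ℕ) < n + 1 := by omega
      refine ⟨⟨(a : ℕ), han⟩, ?_⟩
      have hca : (⟨(a : ℕ), han⟩ : Fin (n + 1)).castSucc = a := Fin.ext rfl
      have hsvala : ((⟨(a : ℕ), han⟩ : Fin (n + 1)).succ : ℕ) = (a : ℕ) + 1 := rfl
      have h2 : e a < e (⟨(a : ℕ), han⟩ : Fin (n + 1)).succ := by
        apply hemono
        rw [Fin.lt_def, hsvala]
        omega
      have h3 : e (⟨(a : ℕ), han⟩ : Fin (n + 1)).succ ≤ e b := by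
        apply hemono.monotone
        rw [Fin.le_def, hsvala]
        omega
      have hsσ : e (⟨(a : ℕ), han⟩ : Fin (n + 1)).succ ∈ σ := by
        rcases hcases (⟨(a : ℕ), han⟩ : Fin (n + 1)).succ with ⟨hh, _⟩ | ⟨hh, _⟩
        · exact hh
        · exfalso
          rcases eq_or_lt_of_le h3 with heq | hlt2
          · exact Finset.disjoint_left.1 hdisj hy (heq ▸ hh)
          · exact (hno _ hh h2).not_gt hlt2
      rw [hCset, Finset.mem_filter]
      rw [hca]
      simp only [Finset.mem_univ, true_and, not_not]
      tauto
    · push_neg at h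
      obtain ⟨x, hx, y, hy, hxy, hno⟩ := h
      obtain ⟨a, rfl⟩ := hsurj x (Finset.mem_union_right _ hx)
      obtain ⟨b, rfl⟩ := hsurj y (Finset.mem_union_right _ hy)
      have hab : (a : ℕ) < (b : ℕ) := by
        have := hemono.lt_iff_lt.1 hxy
        rwa [Fin.lt_def] at this
      have han : (a : ℕ) < n + 1 := by omega
      refine ⟨⟨(a : ℕ), han⟩, ?_⟩
      have hca : (⟨(a : ℕ), han⟩ : Fin (n + 1)).castSucc = a := Fin.ext rfl
      have hsvala : ((⟨(a : ℕ), han⟩ : Fin (n + 1)).succ : ℕ) = (a : ℕ) + 1 := rfl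
      have h2 : e a < e (⟨(a : ℕ), han⟩ : Fin (n + 1)).succ := by
        apply hemono
        rw [Fin.lt_def, hsvala]
        omega
      have h3 : e (⟨(a : ℕ), han⟩ : Fin (n + 1)).succ ≤ e b := by
        apply hemono.monotone
        rw [Fin.le_def, hsvala]
        omega
      have hsτ : e (⟨(a : ℕ), han⟩ : Fin (n + 1)).succ ∉ σ := by
        rcases hcases (⟨(a : ℕ), han⟩ : Fin (n + 1)).succ with ⟨hh, _⟩ | ⟨hh, hh2⟩
        · exfalso
          rcases eq_or_lt_of_le h3 with heq | hlt2
          · exact Finset.disjoint_left.1 hdisj (heq ▸ hh) hy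
          · exact (hno _ hh h2).not_gt hlt2
        · exact hh2
      have hxσ : e a ∉ σ := fun hh => Finset.disjoint_left.1 hdisj hh hx
      rw [hCset, Finset.mem_filter]
      rw [hca]
      simp only [Finset.mem_univ, true_and, not_not]
      tauto
  obtain ⟨i0, hi0⟩ := hwit
  have hCcard : Cset.card ≤ n := by
    have hsub2 : Cset ⊆ Finset.univ.erase i0 := fun j hj =>
      Finset.mem_erase.2 ⟨fun h => hi0 (h ▸ hj), Finset.mem_univ j⟩
    have := Finset.card_le_card hsub2
    rw [Finset.card_erase_of_mem (Finset.mem_univ _), Finset.card_univ,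
      Fintype.card_fin] at this
    omega
  have hdegP : P.natDegree ≤ n := le_trans hPdeg hCcard
  by_cases hlast : e (Fin.last (n + 1)) ∈ σ
  · refine ⟨P, hdegP, ?_, ?_⟩
    · intro m hmσ
      obtain ⟨k, rfl⟩ := hsurj m (Finset.mem_union_left _ hmσ)
      rw [hPsign k, hparity k]
      tauto
    · intro m hmτ
      obtain ⟨k, rfl⟩ := hsurj m (Finset.mem_union_right _ hmτ)
      have hkσ : e k ∉ σ := fun h => Finset.disjoint_left.1 hdisj h hmτ
      have hnp : ¬ 0 < P.eval ((e k : ℕ) : ℝ) := by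
        rw [hPsign k, hparity k]
        tauto
      exact (hPne k).lt_or_gt.resolve_right hnp
  · refine ⟨-P, ?_, ?_, ?_⟩
    · rwa [natDegree_neg]
    · intro m hmσ
      obtain ⟨k, rfl⟩ := hsurj m (Finset.mem_union_left _ hmσ)
      have hnp : ¬ 0 < P.eval ((e k : ℕ) : ℝ) := by
        rw [hPsign k, hparity k]
        tauto
      have := (hPne k).lt_or_gt.resolve_right hnp
      rw [eval_neg]
      linarith
    · intro m hmτ
      obtain ⟨k, rfl⟩ := hsurj m (Finset.mem_union_right _ hmτ)
      have hkσ : e k ∉ σ := fun h => Finset.disjoint_left.1 hdisj h hmτ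
      have hp : 0 < P.eval ((e k : ℕ) : ℝ) := by
        rw [hPsign k, hparity k]
        tauto
      rw [eval_neg]
      linarith

/-- Evaluation of a degree-≤ n polynomial as an affine function of the moment curve. -/
lemma eval_affine {n : ℕ} (P : Polynomial ℝ) (hdeg : P.natDegree ≤ n) (m : ℕ) :
    (∑ j : Fin n, P.coeff ((j : ℕ) + 1) * momentCurve n m j) + P.coeff 0
      = P.eval (m : ℝ) := by
  rw [Polynomial.eval_eq_sum_range' (Nat.lt_succ_of_le hdeg)]
  rw [Finset.sum_range_succ']
  simp only [momentCurve, pow_zero, mul_one]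
  congr 1
  rw [← Fin.sum_univ_eq_sum_range (fun i => P.coeff (i + 1) * (m : ℝ) ^ (i + 1))]


/-- Let `f` be the general position map sending the `i`-th vertex of a
simplicial complex `K` (with totally ordered vertex set, here realized as vertices
labelled by `ℕ`) to the point `λ(i)` of the moment curve in `ℝⁿ` and extending affinely,
so that `f(σ)` is the convex hull of the images of the vertices of `σ`.  If `σ` and `τ`
are disjoint simplices of `K` with `dim σ + dim τ = n`, then `f(σ)` and `f(τ)` intersect
if and only if `σ` and `τ` are meshed. -/
theorem stmt_6 (n : ℕ) (K : AbstractComplex ℕ) (σ τ : Finset ℕ)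
    (hσ : σ ∈ K.faces) (hτ : τ ∈ K.faces) (hdisj : Disjoint σ τ)
    (hdim : (σ.card - 1) + (τ.card - 1) = n) (hcard : σ.card + τ.card = n + 2) :
    (convexHull ℝ (momentCurve n '' σ) ∩ convexHull ℝ (momentCurve n '' τ)).Nonempty ↔
      Meshed σ τ := by
  have hU : (σ ∪ τ).card = n + 2 := by
    rw [Finset.card_union_of_disjoint hdisj, hcard]
  constructor
  · rintro ⟨x, hx1, hx2⟩
    by_contra hm
    obtain ⟨P, hdeg, hσP, hτP⟩ := not_meshed_sep hdisj hU hm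
    -- affine functional
    let ℓ : (Fin n → ℝ) →ₗ[ℝ] ℝ :=
      { toFun := fun v => ∑ j : Fin n, P.coeff ((j : ℕ) + 1) * v j
        map_add' := by
          intro v w
          simp only [Pi.add_apply, mul_add]
          rw [Finset.sum_add_distrib]
        map_smul' := by
          intro c v
          simp only [Pi.smul_apply, smul_eq_mul, RingHom.id_apply]
          rw [Finset.mul_sum]
          apply Finset.sum_congr rfl
          intro j _
          ring }
    let g : (Fin n → ℝ) →ᵃ[ℝ] ℝ :=
      { toFun := fun v => ℓ v + P.coeff 0
        linear := ℓ
        map_vadd' := by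
          intro p v
          simp only [vadd_eq_add, map_add]
          ring }
    have hg : ∀ v, g v = (∑ j : Fin n, P.coeff ((j : ℕ) + 1) * v j) + P.coeff 0 := fun v => rfl
    have hgσ : x ∈ g ⁻¹' (Set.Ioi 0) := by
      have hsub : momentCurve n '' σ ⊆ g ⁻¹' (Set.Ioi 0) := by
        rintro _ ⟨m, hm2, rfl⟩
        simp only [Set.mem_preimage, Set.mem_Ioi]
        rw [hg, eval_affine P hdeg m]
        exact hσP m hm2
      exact convexHull_min hsub ((convex_Ioi (0:ℝ)).affine_preimage g) hx1
    have hgτ : x ∈ g ⁻¹' (Set.Iio 0) := by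
      have hsub : momentCurve n '' τ ⊆ g ⁻¹' (Set.Iio 0) := by
        rintro _ ⟨m, hm2, rfl⟩
        simp only [Set.mem_preimage, Set.mem_Iio]
        rw [hg, eval_affine P hdeg m]
        exact hτP m hm2
      exact convexHull_min hsub ((convex_Iio (0:ℝ)).affine_preimage g) hx2
    simp only [Set.mem_preimage, Set.mem_Ioi, Set.mem_Iio] at hgσ hgτ
    linarith
  · intro hm
    by_contra hne
    rw [Set.not_nonempty_iff_eq_empty] at hne
    have hdisjhull : Disjoint (convexHull ℝ (momentCurve n '' σ))
        (convexHull ℝ (momentCurve n '' τ)) := Set.disjoint_iff_inter_eq_empty.2 hne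
    have hcompσ : IsCompact (convexHull ℝ (momentCurve n '' σ)) :=
      (σ.finite_toSet.image _).isCompact_convexHull (𝕜 := ℝ)
    have hcompτ : IsCompact (convexHull ℝ (momentCurve n '' τ)) :=
      (τ.finite_toSet.image _).isCompact_convexHull (𝕜 := ℝ)
    obtain ⟨f, u, v, hfu, huv, hfv⟩ := geometric_hahn_banach_compact_closed
      (convex_convexHull ℝ _) hcompσ (convex_convexHull ℝ _) hcompτ.isClosed hdisjhull
    set P : Polynomial ℝ := C (-(u + v) / 2)
      + ∑ j : Fin n, C (f (Pi.single j 1)) * X ^ ((j : ℕ) + 1) with hPdef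
    have hdeg : P.natDegree ≤ n := by
      apply le_trans (Polynomial.natDegree_add_le _ _)
      rw [Polynomial.natDegree_C]
      simp only [max_le_iff]
      refine ⟨Nat.zero_le n, ?_⟩
      apply Polynomial.natDegree_sum_le_of_forall_le
      intro j _
      apply le_trans (Polynomial.natDegree_C_mul_le _ _)
      rw [Polynomial.natDegree_X_pow]
      omega
    have hmc : ∀ m : ℕ, momentCurve n m = ∑ j : Fin n, ((m : ℝ) ^ ((j : ℕ) + 1)) • (Pi.single j 1 : Fin n → ℝ) := by
      intro m
      funext k
      rw [Finset.sum_apply]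
      simp only [Pi.smul_apply, smul_eq_mul]
      rw [Finset.sum_eq_single k]
      · simp [momentCurve]
      · intro j _ hjk
        rw [Pi.single_apply, if_neg (Ne.symm hjk)]
        ring
      · intro h
        exact absurd (Finset.mem_univ k) h
    have hPeval : ∀ m : ℕ, P.eval (m : ℝ) = f (momentCurve n m) - (u + v) / 2 := by
      intro m
      rw [hPdef]
      simp only [eval_add, eval_C, eval_finset_sum, eval_mul, eval_pow, eval_X]
      rw [hmc m, map_sum]
      simp only [map_smul, smul_eq_mul]
      rw [Finset.sum_congr rfl (fun (x : Fin n) (_ : x ∈ Finset.univ) =>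
        mul_comm ((m : ℝ) ^ ((x : ℕ) + 1)) (f (Pi.single x 1)))]
      ring
    have hmemσ : ∀ m ∈ σ, P.eval (m : ℝ) < 0 := by
      intro m hm2
      have : f (momentCurve n m) < u :=
        hfu _ (subset_convexHull ℝ _ ⟨m, hm2, rfl⟩)
      rw [hPeval m]
      linarith
    have hmemτ : ∀ m ∈ τ, 0 < P.eval (m : ℝ) := by
      intro m hm2
      have : v < f (momentCurve n m) :=
        hfv _ (subset_convexHull ℝ _ ⟨m, hm2, rfl⟩)
      rw [hPeval m]
      linarith
    exact meshed_no_sep hdisj hU hm P hdeg hmemσ hmemτ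
end

section
/- Let L be a d-dimensional flag simplicial complex, C ⊆ L the support of a mod-2 d-cycle, Δ ⊆ C a d-simplex, and D_m^C(Δ) the full subcomplex of the polyhedral join O_mL containing the sphere copies replacing vertices of Δ. If {σ, τ} is an unordered pair of disjoint simplices of D_m^C(Δ) with dim σ + dim τ = d + δ (where δ = m(d+1) − 1) and vertex set of Δ contained in p(vertex σ) ∪ p(vertex τ), then for every vertex w of Δ, the number of vertices of p^{-1}(w) not contained in σ ∪ τ is at most 1. -/
/-- `L` is `d`-dimensional. -/
def AbstractComplex.IsDimension {V : Type*} (L : AbstractComplex V) (d : ℕ) : Prop :=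
  (∀ s ∈ L.faces, s.card ≤ d + 1) ∧ ∃ s ∈ L.faces, s.card = d + 1

/-- `L` is a flag complex: any finite set of pairwise adjacent vertices spans a simplex. -/
def AbstractComplex.Flag {V : Type*} [DecidableEq V] (L : AbstractComplex V) : Prop :=
  ∀ s : Finset V, s.Nonempty →
    (∀ v ∈ s, ∀ w ∈ s, v ≠ w → ({v, w} : Finset V) ∈ L.faces) → s ∈ L.faces

/-- `C` is the support of a nonzero mod-2 `d`-cycle of `L`: a nonempty set of
`d`-simplices of `L` such that every `(d-1)`-simplex is a face of an even number of
members of `C`. -/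
def IsCycleSupport {V : Type*} [DecidableEq V] (L : AbstractComplex V) (d : ℕ)
    (C : Finset (Finset V)) : Prop :=
  C.Nonempty ∧ (∀ s ∈ C, s ∈ L.faces ∧ s.card = d + 1) ∧
    ∀ t : Finset V, t.card = d → Even ((C.filter fun s => t ⊆ s).card)

/-- The faces of `D_m^C(Δ)`: the full subcomplex of the polyhedral join
`O_m L = ∗_L ∂Δ^m` on the vertex set `(vertex C) × {0} ∪ (vertex Δ) × Fin (m+1)`, i.e.
one point of the `(m-1)`-sphere over every vertex of `C`, together with the whole sphere
(the boundary of an `m`-simplex, with `m+1` vertices) over every vertex of `Δ`.  A simplex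
is a nonempty set `F` of such vertices whose projection `p(F)` to `L` is a simplex of `L`
and whose fiber over each vertex of `L` is a proper subset of the corresponding sphere. -/
def DFaces {V : Type*} [DecidableEq V] (L : AbstractComplex V) (m : ℕ)
    (C : Finset (Finset V)) (Δ : Finset V) : Set (Finset (V × Fin (m + 1))) :=
  {F | F.Nonempty ∧ F.image Prod.fst ∈ L.faces ∧
    (∀ q ∈ F, q.1 ∈ Δ ∨ (q.2 = 0 ∧ ∃ s ∈ C, q.1 ∈ s)) ∧
    ∀ v : V, (F.filter fun q => q.1 = v).card ≤ m}

/-- Let `L` be a `d`-dimensional flag complex, `C ⊆ L` the support of a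
mod-2 `d`-cycle, `Δ ∈ C` a `d`-simplex, and `D_m^C(Δ)` as above.  If `{σ, τ}` is a pair
of disjoint simplices of `D_m^C(Δ)` with `dim σ + dim τ = d + δ` (where
`δ = m(d+1) − 1`, so `card σ + card τ = (m+1)(d+1)`) and `vertex Δ ⊆ p(σ) ∪ p(τ)`, then
for every vertex `w` of `Δ` at most one vertex of `p⁻¹(w)` is missing from `σ ∪ τ`. -/
theorem stmt_7 {V : Type} [Fintype V] [DecidableEq V]
    (L : AbstractComplex V) (d m : ℕ) (hm : 1 ≤ m)
    (hflag : L.Flag) (hdim : L.IsDimension d)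
    (C : Finset (Finset V)) (hC : IsCycleSupport L d C)
    (Δ : Finset V) (hΔ : Δ ∈ C)
    (σ τ : Finset (V × Fin (m + 1)))
    (hσ : σ ∈ DFaces L m C Δ) (hτ : τ ∈ DFaces L m C Δ)
    (hdisj : Disjoint σ τ)
    (hcard : σ.card + τ.card = (m + 1) * (d + 1))
    (hΔsub : Δ ⊆ (σ ∪ τ).image Prod.fst) :
    ∀ w ∈ Δ,
      ((({w} : Finset V) ×ˢ (Finset.univ : Finset (Fin (m + 1)))) \ (σ ∪ τ)).card ≤ 1 := by

  classical
  intro w hw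
  obtain ⟨hσne, hσface, hσvert, hσfib⟩ := hσ
  obtain ⟨hτne, hτface, hτvert, hτfib⟩ := hτ
  set A : Finset V := σ.image Prod.fst with hA
  set B : Finset V := τ.image Prod.fst with hB
  set S : Finset (V × Fin (m + 1)) := σ ∪ τ with hS
  have hΔcard : Δ.card = d + 1 := (hC.2.1 Δ hΔ).2
  have hAd : A.card ≤ d + 1 := hdim.1 A hσface
  have hBd : B.card ≤ d + 1 := hdim.1 B hτface
  have himg : S.image Prod.fst = A ∪ B := by
    simp [hS, Finset.image_union, hA, hB]
  -- fibers of S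
  have hScard : S.card = (m + 1) * (d + 1) := by
    rw [hS, Finset.card_union_of_disjoint hdisj, hcard]
  have hfib_split : ∀ v : V, (S.filter fun q => q.1 = v).card
      = (σ.filter fun q => q.1 = v).card + (τ.filter fun q => q.1 = v).card := by
    intro v
    rw [hS, Finset.filter_union,
      Finset.card_union_of_disjoint (Finset.disjoint_filter_filter hdisj)]
  have hfib_notA : ∀ v : V, v ∉ A → (σ.filter fun q => q.1 = v).card = 0 := by
    intro v hv
    rw [Finset.card_eq_zero, Finset.filter_eq_empty_iff]
    intro q hq hq1
    exact hv (hA ▸ Finset.mem_image.2 ⟨q, hq, hq1⟩)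
  have hfib_notB : ∀ v : V, v ∉ B → (τ.filter fun q => q.1 = v).card = 0 := by
    intro v hv
    rw [Finset.card_eq_zero, Finset.filter_eq_empty_iff]
    intro q hq hq1
    exact hv (hB ▸ Finset.mem_image.2 ⟨q, hq, hq1⟩)
  have hfib_top : ∀ v : V, (S.filter fun q => q.1 = v).card ≤ m + 1 := by
    intro v
    have hsub : (S.filter fun q => q.1 = v) ⊆ ({v} : Finset V) ×ˢ Finset.univ := by
      intro q hq
      obtain ⟨_, hq1⟩ := Finset.mem_filter.1 hq
      rw [Finset.mem_product]
      simp [hq1]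
    calc (S.filter fun q => q.1 = v).card ≤ (({v} : Finset V) ×ˢ (Finset.univ : Finset (Fin (m+1)))).card :=
          Finset.card_le_card hsub
      _ = m + 1 := by simp [Finset.card_product]
  -- the bound function
  set Bnd : V → ℕ := fun v =>
    if v ∈ Δ then (if v ∈ A ∧ v ∈ B then m + 1 else m)
    else (if v ∈ A ∪ B then 1 else 0) with hBnd
  have hle : ∀ v ∈ (Finset.univ : Finset V),
      (S.filter fun q => q.1 = v).card ≤ Bnd v := by
    intro v _
    by_cases hvΔ : v ∈ Δ
    · by_cases hvAB : v ∈ A ∧ v ∈ B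
      · simp only [hBnd, if_pos hvΔ, if_pos hvAB]
        exact hfib_top v
      · simp only [hBnd, if_pos hvΔ, if_neg hvAB]
        rw [hfib_split v]
        rcases not_and_or.1 hvAB with hv | hv
        · rw [hfib_notA v hv]
          simpa using hτfib v
        · rw [hfib_notB v hv]
          simpa using hσfib v
    · simp only [hBnd, if_neg hvΔ]
      by_cases hvAB : v ∈ A ∪ B
      · simp only [if_pos hvAB]
        apply Finset.card_le_one.2
        intro q hq q' hq'
        obtain ⟨hqS, hq1⟩ := Finset.mem_filter.1 hq
        obtain ⟨hq'S, hq'1⟩ := Finset.mem_filter.1 hq'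
        have hz : q.2 = 0 := by
          rcases Finset.mem_union.1 hqS with h | h
          · rcases hσvert q h with h1 | h1
            · exact absurd (hq1 ▸ h1) hvΔ
            · exact h1.1
          · rcases hτvert q h with h1 | h1
            · exact absurd (hq1 ▸ h1) hvΔ
            · exact h1.1
        have hz' : q'.2 = 0 := by
          rcases Finset.mem_union.1 hq'S with h | h
          · rcases hσvert q' h with h1 | h1
            · exact absurd (hq'1 ▸ h1) hvΔ
            · exact h1.1
          · rcases hτvert q' h with h1 | h1
            · exact absurd (hq'1 ▸ h1) hvΔ
            · exact h1.1
        exact Prod.ext (hq1.trans hq'1.symm) (hz.trans hz'.symm)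
      · simp only [if_neg hvAB]
        rw [Nat.le_zero, Finset.card_eq_zero, Finset.filter_eq_empty_iff]
        intro q hq hq1
        exact hvAB (himg ▸ Finset.mem_image.2 ⟨q, hq, hq1⟩)
  -- the total sum of fibers is the cardinality of S
  have hsum : ∑ v ∈ (Finset.univ : Finset V), (S.filter fun q => q.1 = v).card = S.card :=
    (Finset.card_eq_sum_card_fiberwise (fun q _ => Finset.mem_univ q.1)).symm
  -- bound on the sum of Bnd
  have hBsum : ∑ v ∈ (Finset.univ : Finset V), Bnd v ≤ (m + 1) * (d + 1) := by
    rw [← Finset.sum_filter_add_sum_filter_not Finset.univ (fun v => v ∈ Δ)]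
    have hfΔ : Finset.univ.filter (fun v => v ∈ Δ) = Δ := by
      ext v; simp
    have h1 : ∑ v ∈ Finset.univ.filter (fun v => v ∈ Δ), Bnd v
        = m * Δ.card + (Δ.filter fun v => v ∈ A ∧ v ∈ B).card := by
      rw [hfΔ]
      have : ∀ v ∈ Δ, Bnd v = m + (if v ∈ A ∧ v ∈ B then 1 else 0) := by
        intro v hv
        simp only [hBnd, if_pos hv]
        split <;> omega
      rw [Finset.sum_congr rfl this, Finset.sum_add_distrib, Finset.sum_const,
        smul_eq_mul, mul_comm, Finset.sum_boole]
      simp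
    have h2 : ∑ v ∈ Finset.univ.filter (fun v => v ∉ Δ), Bnd v
        = ((A ∪ B) \ Δ).card := by
      have : ∀ v ∈ Finset.univ.filter (fun v => v ∉ Δ),
          Bnd v = (if v ∈ A ∪ B then 1 else 0) := by
        intro v hv
        simp only [Finset.mem_filter] at hv
        simp only [hBnd, if_neg hv.2]
      rw [Finset.sum_congr rfl this, Finset.sum_boole]
      have hset : (Finset.univ.filter (fun v => v ∉ Δ)).filter (fun v => v ∈ A ∪ B)
          = (A ∪ B) \ Δ := by
        ext v
        simp [Finset.mem_sdiff, and_comm]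
      rw [hset]
      simp
    rw [h1, h2]
    -- arithmetic
    have hcover : (A ∩ Δ) ∪ (B ∩ Δ) = Δ := by
      ext v
      simp only [Finset.mem_union, Finset.mem_inter]
      constructor
      · rintro (⟨_, h⟩ | ⟨_, h⟩) <;> exact h
      · intro hv
        have := hΔsub hv
        rw [himg] at this
        rcases Finset.mem_union.1 this with h | h
        · exact Or.inl ⟨h, hv⟩
        · exact Or.inr ⟨h, hv⟩
    have hIE : (A ∩ Δ).card + (B ∩ Δ).card
        = Δ.card + ((A ∩ Δ) ∩ (B ∩ Δ)).card := by
      rw [← Finset.card_union_add_card_inter, hcover]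
    have hk : (Δ.filter fun v => v ∈ A ∧ v ∈ B).card = ((A ∩ Δ) ∩ (B ∩ Δ)).card := by
      have hset : (Δ.filter fun v => v ∈ A ∧ v ∈ B) = (A ∩ Δ) ∩ (B ∩ Δ) := by
        ext v
        simp only [Finset.mem_filter, Finset.mem_inter]
        tauto
      rw [hset]
    have hA1 : (A ∩ Δ).card + (A \ Δ).card = A.card := Finset.card_inter_add_card_sdiff A Δ
    have hB1 : (B ∩ Δ).card + (B \ Δ).card = B.card := Finset.card_inter_add_card_sdiff B Δ
    have hcup : ((A ∪ B) \ Δ).card ≤ (A \ Δ).card + (B \ Δ).card := by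
      rw [Finset.union_sdiff_distrib]
      exact Finset.card_union_le _ _
    rw [hk, hΔcard]
    rw [hΔcard] at hIE
    have hmul : (m + 1) * (d + 1) = m * (d + 1) + (d + 1) := by ring
    omega
  -- final step: fiber over w has at least m elements
  have hfw : m ≤ (S.filter fun q => q.1 = w).card := by
    by_contra hlt
    push_neg at hlt
    have hwB : m ≤ Bnd w := by
      simp only [hBnd, if_pos hw]
      split <;> omega
    have hstrict : ∑ v ∈ (Finset.univ : Finset V), (S.filter fun q => q.1 = v).card
        < ∑ v ∈ (Finset.univ : Finset V), Bnd v :=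
      Finset.sum_lt_sum hle ⟨w, Finset.mem_univ w, lt_of_lt_of_le hlt hwB⟩
    rw [hsum, hScard] at hstrict
    omega
  have hinter : (({w} : Finset V) ×ˢ (Finset.univ : Finset (Fin (m + 1)))) ∩ S
      = S.filter fun q => q.1 = w := by
    ext q
    simp only [Finset.mem_inter, Finset.mem_filter, Finset.mem_product,
      Finset.mem_singleton, Finset.mem_univ, and_true]
    tauto
  have hpart := Finset.card_sdiff_add_card_inter
    (({w} : Finset V) ×ˢ (Finset.univ : Finset (Fin (m + 1)))) S
  rw [hinter] at hpart
  have hprod : (({w} : Finset V) ×ˢ (Finset.univ : Finset (Fin (m + 1)))).card = m + 1 := by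
    simp [Finset.card_product]
  have := hfib_top w
  omega
end

section
/- With notation as in the setup of the cycle Ω_m: if {σ, τ} is an unordered pair of disjoint simplices of D_m^C(Δ) with dim σ + dim τ = d + δ and vertex Δ ⊆ p(vertex σ) ∪ p(vertex τ), then both p(σ) and p(τ) are d-dimensional simplices of L (i.e., they each have exactly d+1 vertices). -/
open Finset

section Fibers

variable {V α : Type*} [DecidableEq V]

def fiber (F : Finset (V × α)) (v : V) : Finset (V × α) :=
  F.filter fun q => q.1 = v

lemma fiber_eq_empty_of_notMem_image {F : Finset (V × α)} {v : V}
    (hv : v ∉ F.image Prod.fst) : fiber F v = ∅ :=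
  filter_eq_empty_iff.2 fun q hq hqv => hv (mem_image.2 ⟨q, hq, hqv⟩)

lemma card_fiber_add_card_fiber_eq [DecidableEq α] {σ τ : Finset (V × α)} (h : Disjoint σ τ)
    (v : V) : (fiber σ v).card + (fiber τ v).card = (fiber σ v ∪ fiber τ v).card :=
  (card_union_of_disjoint (h.mono (filter_subset _ _) (filter_subset _ _))).symm

lemma card_fiber_add_card_fiber_le_card [DecidableEq α] [Fintype α] {σ τ : Finset (V × α)}
    (h : Disjoint σ τ) (v : V) :
    (fiber σ v).card + (fiber τ v).card ≤ Fintype.card α := by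
  have hsub : fiber σ v ∪ fiber τ v ⊆ {v} ×ˢ univ := by
    intro q hq
    simp only [fiber, mem_union, mem_filter] at hq
    simp only [mem_product, mem_singleton, mem_univ, and_true]
    rcases hq with hq | hq <;> exact hq.2
  rw [card_fiber_add_card_fiber_eq h]
  simpa using card_le_card hsub

lemma sum_ite_mem_of_subset {s t : Finset V} (h : t ⊆ s) (c : ℕ) :
    (∑ v ∈ s, if v ∈ t then c else 0) = c * t.card := by
  rw [sum_ite_mem, inter_eq_right.2 h, sum_const, smul_eq_mul, mul_comm]

end Fibers

section DFaces

variable {V : Type*} [DecidableEq V] {L : AbstractComplex V} {m : ℕ}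
  {C : Finset (Finset V)} {Δ : Finset V}

lemma fiber_subset_singleton_of_mem_DFaces {F : Finset (V × Fin (m + 1))}
    (hF : F ∈ DFaces L m C Δ) {v : V} (hv : v ∉ Δ) : fiber F v ⊆ {(v, 0)} := by
  intro q hq
  obtain ⟨hqF, rfl⟩ := mem_filter.1 hq
  rcases hF.2.2.1 q hqF with hqΔ | ⟨hq0, -⟩
  · exact absurd hqΔ hv
  · exact mem_singleton.2 (Prod.ext rfl hq0)

variable {σ τ : Finset (V × Fin (m + 1))}

lemma card_fiber_add_card_fiber_add_le_of_mem_DFaces (hσ : σ ∈ DFaces L m C Δ)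
    (hτ : τ ∈ DFaces L m C Δ) (hdisj : Disjoint σ τ) {v : V}
    (hcover : v ∈ Δ → v ∈ σ.image Prod.fst ∪ τ.image Prod.fst) :
    (fiber σ v).card + (fiber τ v).card + (if v ∈ Δ then 1 else 0) ≤
      (if v ∈ Δ then m else 0) + (if v ∈ σ.image Prod.fst then 1 else 0) +
        (if v ∈ τ.image Prod.fst then 1 else 0) := by
  have hσm : (fiber σ v).card ≤ m := hσ.2.2.2 v
  have hτm : (fiber τ v).card ≤ m := hτ.2.2.2 v
  have hfull : (fiber σ v).card + (fiber τ v).card ≤ m + 1 := by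
    simpa using card_fiber_add_card_fiber_le_card hdisj v
  have hσ0 : v ∉ σ.image Prod.fst → (fiber σ v).card = 0 := fun hv => by
    rw [fiber_eq_empty_of_notMem_image hv, card_empty]
  have hτ0 : v ∉ τ.image Prod.fst → (fiber τ v).card = 0 := fun hv => by
    rw [fiber_eq_empty_of_notMem_image hv, card_empty]
  have hoff : v ∉ Δ → (fiber σ v).card + (fiber τ v).card ≤ 1 := fun hv => by
    rw [card_fiber_add_card_fiber_eq hdisj]
    simpa using card_le_card (union_subset (fiber_subset_singleton_of_mem_DFaces hσ hv)
      (fiber_subset_singleton_of_mem_DFaces hτ hv))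
  grind

lemma card_add_card_add_card_le_of_mem_DFaces (hσ : σ ∈ DFaces L m C Δ)
    (hτ : τ ∈ DFaces L m C Δ) (hdisj : Disjoint σ τ)
    (hcover : Δ ⊆ σ.image Prod.fst ∪ τ.image Prod.fst) :
    σ.card + τ.card + Δ.card ≤
      m * Δ.card + (σ.image Prod.fst).card + (τ.image Prod.fst).card := by
  set S := σ.image Prod.fst ∪ τ.image Prod.fst
  have hσS : σ.image Prod.fst ⊆ S := subset_union_left
  have hτS : τ.image Prod.fst ⊆ S := subset_union_right
  have hσsum : σ.card = ∑ v ∈ S, (fiber σ v).card :=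
    card_eq_sum_card_fiberwise fun q hq => hσS (mem_image_of_mem _ hq)
  have hτsum : τ.card = ∑ v ∈ S, (fiber τ v).card :=
    card_eq_sum_card_fiberwise fun q hq => hτS (mem_image_of_mem _ hq)
  have hsum := sum_le_sum fun v (_ : v ∈ S) =>
    card_fiber_add_card_fiber_add_le_of_mem_DFaces hσ hτ hdisj (v := v) fun hv => hcover hv
  simp only [sum_add_distrib, sum_ite_mem_of_subset hcover, sum_ite_mem_of_subset hσS,
    sum_ite_mem_of_subset hτS] at hsum
  omega

end DFaces

theorem stmt_8_general {V : Type} [DecidableEq V]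
    (L : AbstractComplex V) (d m : ℕ)
    (hdim : L.IsDimension d)
    (C : Finset (Finset V)) (hC : IsCycleSupport L d C)
    (Δ : Finset V) (hΔ : Δ ∈ C)
    (σ τ : Finset (V × Fin (m + 1)))
    (hσ : σ ∈ DFaces L m C Δ) (hτ : τ ∈ DFaces L m C Δ)
    (hdisj : Disjoint σ τ)
    (hcard : σ.card + τ.card = (m + 1) * (d + 1))
    (hΔsub : Δ ⊆ (σ ∪ τ).image Prod.fst) :
    (σ.image Prod.fst).card = d + 1 ∧ (τ.image Prod.fst).card = d + 1 ∧
      σ.image Prod.fst ∈ L.faces ∧ τ.image Prod.fst ∈ L.faces := by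
  have hΔcard : Δ.card = d + 1 := (hC.2.1 Δ hΔ).2
  have hcount := card_add_card_add_card_le_of_mem_DFaces hσ hτ hdisj (by rwa [← image_union])
  have hσle := hdim.1 _ hσ.2.1
  have hτle := hdim.1 _ hτ.2.1
  rw [hcard, hΔcard, add_one_mul m] at hcount
  exact ⟨by omega, by omega, hσ.2.1, hτ.2.1⟩

/-- With notation as in the setup of the cycle `Ω_m`: if `{σ, τ}` is a
pair of disjoint simplices of `D_m^C(Δ)` with `dim σ + dim τ = d + δ` (i.e.
`card σ + card τ = (m+1)(d+1)`) and `vertex Δ ⊆ p(vertex σ) ∪ p(vertex τ)`, then both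
`p(σ)` and `p(τ)` are `d`-dimensional simplices of `L`, i.e. each has exactly `d+1`
vertices. -/
theorem stmt_8 {V : Type} [Fintype V] [DecidableEq V]
    (L : AbstractComplex V) (d m : ℕ) (hm : 1 ≤ m)
    (hflag : L.Flag) (hdim : L.IsDimension d)
    (C : Finset (Finset V)) (hC : IsCycleSupport L d C)
    (Δ : Finset V) (hΔ : Δ ∈ C)
    (σ τ : Finset (V × Fin (m + 1)))
    (hσ : σ ∈ DFaces L m C Δ) (hτ : τ ∈ DFaces L m C Δ)
    (hdisj : Disjoint σ τ)
    (hcard : σ.card + τ.card = (m + 1) * (d + 1))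
    (hΔsub : Δ ⊆ (σ ∪ τ).image Prod.fst) :
    (σ.image Prod.fst).card = d + 1 ∧ (τ.image Prod.fst).card = d + 1 ∧
      σ.image Prod.fst ∈ L.faces ∧ τ.image Prod.fst ∈ L.faces :=
  stmt_8_general L d m hdim C hC Δ hΔ σ τ hσ hτ hdisj hcard hΔsub
end

section
/- Let A be a finite affine hyperplane arrangement in ℂ^n and let H ≤ G be subspaces in the intersection poset Q(A) (so G ⊆ H as subsets of ℂ^n), and let j: M(A_G) ↪ M(A_H) be the inclusion of complements of the normal subarrangements. Then there is a map f: M(A_H) → M(A_G) such that j∘f ≃ id on M(A_H); hence f_*: π₁(M(A_H)) → π₁(M(A_G)) is injective. -/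
open scoped unitInterval

namespace Stmt12Aux

attribute [local instance] Path.Homotopic.setoid

lemma line_avoid {n : ℕ} (f : (Fin n → ℂ) →ₗ[ℂ] ℂ) (c : ℂ) (q x : Fin n → ℂ)
    (hq : f q = c) (hx : f x ≠ c) (s : ℂ) (hs : s ≠ 0) :
    f (q + s • (x - q)) ≠ c := by
  intro h
  apply hx
  have : f (q + s • (x - q)) = c + s * (f x - c) := by
    simp [map_add, map_smul, map_sub, hq, smul_eq_mul]
  rw [this] at h
  have h2 : s * (f x - c) = 0 := by linear_combination h
  rcases mul_eq_zero.mp h2 with h3 | h3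
  · exact absurd h3 hs
  · exact sub_eq_zero.mp h3

lemma exists_generic {n : ℕ} (H : Set (Fin n → ℂ)) (hne : H.Nonempty)
    (hline : ∀ a ∈ H, ∀ b ∈ H, ∀ t : ℂ, a + t • (b - a) ∈ H)
    (S : Finset (Set (Fin n → ℂ)))
    (hS : ∀ K ∈ S, ∃ (f : (Fin n → ℂ) →ₗ[ℂ] ℂ) (c : ℂ), K = {x | f x = c})
    (hSH : ∀ K ∈ S, ¬ H ⊆ K) :
    ∃ q ∈ H, ∀ K ∈ S, q ∉ K := by
  classical
  induction S using Finset.induction with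
  | empty => obtain ⟨q, hq⟩ := hne; exact ⟨q, hq, by simp⟩
  | @insert K S hKS ih =>
    obtain ⟨q, hqH, hq⟩ := ih (fun K' hK' => hS K' (Finset.mem_insert_of_mem hK'))
      (fun K' hK' => hSH K' (Finset.mem_insert_of_mem hK'))
    obtain ⟨h, hhH, hhK⟩ := Set.not_subset.mp (hSH K (Finset.mem_insert_self K S))
    have hfin : ∀ K' ∈ insert K S, {t : ℂ | q + t • (h - q) ∈ K'}.Finite := by
      intro K' hK'
      obtain ⟨f, c, hfc⟩ := hS K' hK'
      have hset : {t : ℂ | q + t • (h - q) ∈ K'} =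
          {t : ℂ | (f q - c) + t * (f h - f q) = 0} := by
        subst hfc
        ext t
        simp only [Set.mem_setOf_eq, map_add, map_smul, map_sub, smul_eq_mul]
        constructor <;> intro ht <;> linear_combination ht
      rw [hset]
      by_cases hb : f h - f q = 0
      · have ha : f q - c ≠ 0 := by
          rcases Finset.mem_insert.mp hK' with rfl | hK'S
          · have : f h ≠ c := by
              intro hc; exact hhK (by rw [hfc]; exact hc)
            intro hc
            apply this
            rw [sub_eq_zero.mp hb, sub_eq_zero.mp hc]
          · have : f q ≠ c := by
              intro hc; exact hq K' hK'S (by rw [hfc]; exact hc)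
            exact sub_ne_zero.mpr this
        have : {t : ℂ | (f q - c) + t * (f h - f q) = 0} = ∅ := by
          ext t; simp [hb, ha]
        simp [this]
      · apply Set.Finite.subset (Set.finite_singleton (-(f q - c) / (f h - f q)))
        intro t ht
        simp only [Set.mem_setOf_eq] at ht
        simp only [Set.mem_singleton_iff]
        rw [eq_div_iff hb]
        linear_combination ht
    have hbig : (⋃ K' ∈ (insert K S : Finset (Set (Fin n → ℂ))),
        {t : ℂ | q + t • (h - q) ∈ K'}).Finite :=
      Set.Finite.biUnion (Finset.finite_toSet _) (fun K' hK' => hfin K' hK')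
    obtain ⟨t, ht⟩ := (Set.Finite.infinite_compl hbig).nonempty
    refine ⟨q + t • (h - q), hline q hqH h hhH t, ?_⟩
    intro K' hK' hmem
    exact ht (Set.mem_biUnion hK' hmem)

open FundamentalGroupoid CategoryTheory
open scoped FundamentalGroupoid

lemma mapFn_mapFn {X Y Z : Type*} [TopologicalSpace X] [TopologicalSpace Y] [TopologicalSpace Z]
    {x₀ x₁ : X} (p : Path.Homotopic.Quotient x₀ x₁) (f : C(X, Y)) (g : C(Y, Z)) :
    (p.map f).map g = p.map (g.comp f) :=
  Path.Homotopic.Quotient.map_comp.symm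

lemma mapFn_id {X : Type*} [TopologicalSpace X] {x₀ x₁ : X}
    (p : Path.Homotopic.Quotient x₀ x₁) :
    p.map (ContinuousMap.id X) = p :=
  Quotient.inductionOn p fun a => congrArg (Quotient.mk _) (Path.map_id a)

lemma injective_of_homotopic_comp_id {X Y : Type} [TopologicalSpace X] [TopologicalSpace Y]
    (f : C(X, Y)) (j : C(Y, X)) (hH : (j.comp f).Homotopic (ContinuousMap.id X)) (y : X) :
    Function.Injective
      (fun p : Path.Homotopic.Quotient y y => Path.Homotopic.Quotient.map p f) := by
  obtain ⟨K⟩ := hH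
  intro p p' hpp'
  simp only at hpp'
  have h2 : p.map (j.comp f) = p'.map (j.comp f) := by
    have := congrArg (fun z : Path.Homotopic.Quotient (f y) (f y) =>
      Path.Homotopic.Quotient.map z j) hpp'
    simp only [mapFn_mapFn] at this
    exact this
  let XT : TopCat := TopCat.of X
  let φ : C(XT, XT) := j.comp f
  let idX : C(XT, XT) := ContinuousMap.id X
  let K' : φ.Homotopy idX := K
  let P : fromTop (X := XT) y ⟶ fromTop y := p
  let P' : fromTop (X := XT) y ⟶ fromTop y := p'
  have e1 := K'.eq_diag_path P
  have e1' := K'.eq_diag_path P'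
  have hc : (πₘ (TopCat.ofHom φ)).map P ≫ ⟦K'.evalAt y⟧ = (πₘ (TopCat.ofHom φ)).map P' ≫ ⟦K'.evalAt y⟧ :=
    congrArg (fun z => z ≫ ⟦K'.evalAt y⟧) (show (πₘ (TopCat.ofHom φ)).map P = (πₘ (TopCat.ofHom φ)).map P' from h2)
  rw [e1.1, e1'.1, ← e1.2, ← e1'.2] at hc
  have h3 := (@cancel_epi _ _ _ _ _ _ (@IsIso.epi_of_iso _ _ _ _ _ (IsIso.of_groupoid _)) _ _).mp hc
  have h4 : p.map (ContinuousMap.id X) = p'.map (ContinuousMap.id X) := h3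
  rw [mapFn_id, mapFn_id] at h4
  exact h4

lemma combo_pos {t u : ℝ} (h0 : 0 ≤ t) (h1 : t ≤ 1) (hu : 0 < u) : 0 < (1 - t) * u + t := by
  rcases eq_or_lt_of_le h0 with h | h
  · rw [← h]; simpa using hu
  · exact add_pos_of_nonneg_of_pos (mul_nonneg (by linarith) hu.le) h

end Stmt12Aux

/-- The complement `M(A_G)` of the normal subarrangement `A_G = {K ∈ A | G ⊆ K}` of an
affine arrangement `A` in `ℂⁿ`. -/
def normalComplement {n : ℕ} (A : Finset (Set (Fin n → ℂ))) (G : Set (Fin n → ℂ)) :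
    Set (Fin n → ℂ) :=
  {x | ∀ K ∈ A, G ⊆ K → x ∉ K}

/-- Let `A` be a finite affine hyperplane arrangement in `ℂⁿ` and
`H ≤ G` subspaces in the intersection poset `Q(A)` (so `G ⊆ H` as subsets of `ℂⁿ`).
Then, with `j : M(A_G) ↪ M(A_H)` the inclusion of arrangement complements, there is a
continuous map `f : M(A_H) → M(A_G)` with `j ∘ f` homotopic to the identity of `M(A_H)`;
hence the induced map `f_* : π₁(M(A_H)) → π₁(M(A_G))` is injective. -/
theorem stmt_12 (n : ℕ) (A : Finset (Set (Fin n → ℂ)))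
    (hhyp : ∀ K ∈ A, ∃ (f : (Fin n → ℂ) →ₗ[ℂ] ℂ) (c : ℂ), f ≠ 0 ∧ K = {x | f x = c})
    (G H : Set (Fin n → ℂ))
    -- `G` and `H` are subspaces of the intersection poset `Q(A)`
    (hG : G = Set.univ ∨ ∃ B : Finset (Set (Fin n → ℂ)),
      B ⊆ A ∧ B.Nonempty ∧ G = ⋂₀ ↑B ∧ G.Nonempty)
    (hH : H = Set.univ ∨ ∃ B : Finset (Set (Fin n → ℂ)),
      B ⊆ A ∧ B.Nonempty ∧ H = ⋂₀ ↑B ∧ H.Nonempty)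
    -- `H ≤ G` in `Q(A)`, i.e. `G ⊆ H`
    (hGH : G ⊆ H)
    -- `j` is the inclusion `M(A_G) ↪ M(A_H)`
    (j : C(normalComplement A G, normalComplement A H))
    (hj : ∀ y : normalComplement A G, (j y : Fin n → ℂ) = (y : Fin n → ℂ)) :
    ∃ f : C(normalComplement A H, normalComplement A G),
      (j.comp f).Homotopic (ContinuousMap.id (normalComplement A H)) ∧
      ∀ y : normalComplement A H,
        Function.Injective
          (fun p : Path.Homotopic.Quotient y y => Path.Homotopic.Quotient.map p f) := by
  classical
  choose F c hF0 hFK using hhyp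
  have hHne : H.Nonempty := by
    rcases hH with h | ⟨B, hBA, hBne, hHB, hne⟩
    · exact ⟨0, by rw [h]; trivial⟩
    · exact hne
  have hline : ∀ a ∈ H, ∀ b ∈ H, ∀ t : ℂ, a + t • (b - a) ∈ H := by
    rcases hH with h | ⟨B, hBA, hBne, hHB, hne⟩
    · subst h; intro a _ b _ t; trivial
    · subst hHB
      intro a ha b hb t
      rw [Set.mem_sInter] at ha hb ⊢
      intro K hK
      have hKA : K ∈ A := hBA (by exact_mod_cast hK)
      have ha' := ha K hK
      have hb' := hb K hK
      rw [hFK K hKA] at ha' hb' ⊢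
      simp only [Set.mem_setOf_eq, map_add, map_smul, map_sub, smul_eq_mul] at *
      rw [ha', hb']
      ring
  set Bad : Finset (Set (Fin n → ℂ)) := A.filter (fun K => G ⊆ K ∧ ¬ H ⊆ K) with hBadDef
  obtain ⟨q, hqH, hqBad⟩ := Stmt12Aux.exists_generic H hHne hline Bad
    (fun K hK => ⟨F K (Finset.mem_of_mem_filter K hK), c K (Finset.mem_of_mem_filter K hK),
      hFK K (Finset.mem_of_mem_filter K hK)⟩)
    (fun K hK => (Finset.mem_filter.mp hK).2.2)
  have hclosed : ∀ K ∈ A, IsClosed K := by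
    intro K hK
    have hKp : K = (F K hK) ⁻¹' {c K hK} := by
      conv_lhs => rw [hFK K hK]
      ext x
      simp [Set.mem_preimage]
    rw [hKp]
    exact IsClosed.preimage (F K hK).continuous_of_finiteDimensional isClosed_singleton
  obtain ⟨δ, hδpos, hδ⟩ : ∃ δ > 0, ∀ z : Fin n → ℂ, ‖z - q‖ < δ → ∀ K ∈ Bad, z ∉ K := by
    have hclosedU : IsClosed (⋃ K ∈ Bad, (K : Set (Fin n → ℂ))) :=
      Set.Finite.isClosed_biUnion Bad.finite_toSet
        (fun K hK => hclosed K (Finset.mem_of_mem_filter K hK))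
    have hqU : q ∈ (⋃ K ∈ Bad, (K : Set (Fin n → ℂ)))ᶜ := by
      rw [Set.mem_compl_iff]
      intro hq'
      obtain ⟨K, hK, hqK⟩ := Set.mem_iUnion₂.mp hq'
      exact hqBad K hK hqK
    obtain ⟨ε, hεpos, hball⟩ := Metric.isOpen_iff.mp hclosedU.isOpen_compl q hqU
    refine ⟨ε, hεpos, fun z hz K hK hzK => ?_⟩
    have hzb : z ∈ Metric.ball q ε := by rwa [Metric.mem_ball, dist_eq_norm]
    exact (hball hzb) (Set.mem_iUnion₂.mpr ⟨K, hK, hzK⟩)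
  have hden : ∀ x : Fin n → ℂ, (0:ℝ) < 1 + ‖x - q‖ := fun x => by positivity
  set s : (Fin n → ℂ) → ℝ := fun x => δ / (1 + ‖x - q‖) with hsdef
  have hspos : ∀ x, 0 < s x := fun x => div_pos hδpos (hden x)
  have hmemH : ∀ x ∈ normalComplement A H, ∀ r : ℝ, 0 < r →
      q + (r : ℂ) • (x - q) ∈ normalComplement A H := by
    intro x hx r hr K hK hHK
    have hqK : q ∈ K := hHK hqH
    have hxK : x ∉ K := hx K hK hHK
    rw [hFK K hK] at hqK hxK ⊢
    exact Stmt12Aux.line_avoid _ _ _ _ hqK hxK _ (Complex.ofReal_ne_zero.mpr hr.ne')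
  have hmemG : ∀ x ∈ normalComplement A H,
      q + ((s x : ℝ) : ℂ) • (x - q) ∈ normalComplement A G := by
    intro x hx K hK hGK
    by_cases hHK : H ⊆ K
    · exact hmemH x hx (s x) (hspos x) K hK hHK
    · refine hδ _ ?_ K (Finset.mem_filter.mpr ⟨hK, hGK, hHK⟩)
      rw [add_sub_cancel_left, norm_smul]
      have h1 : ‖((s x : ℝ) : ℂ)‖ = s x := by
        rw [Complex.norm_real, Real.norm_eq_abs, abs_of_pos (hspos x)]
      rw [h1, hsdef]
      simp only
      rw [div_mul_eq_mul_div, div_lt_iff₀ (hden x)]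
      nlinarith [norm_nonneg (x - q), hδpos]
  have hscont : Continuous s := by
    rw [hsdef]
    exact continuous_const.div
      (continuous_const.add ((continuous_id.sub continuous_const).norm))
      (fun x => (hden x).ne')
  let fmap : C(normalComplement A H, normalComplement A G) :=
    { toFun := fun x => ⟨q + ((s (x : Fin n → ℂ) : ℝ) : ℂ) • ((x : Fin n → ℂ) - q),
        hmemG x x.2⟩
      continuous_toFun := by
        apply Continuous.subtype_mk
        exact continuous_const.add
          ((Complex.continuous_ofReal.comp (hscont.comp continuous_subtype_val)).smul
            (continuous_subtype_val.sub continuous_const)) }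
  have hcombo : ∀ (t : I) (x : normalComplement A H),
      (0:ℝ) < (1 - (t : ℝ)) * s (x : Fin n → ℂ) + (t : ℝ) :=
    fun t x => Stmt12Aux.combo_pos t.2.1 t.2.2 (hspos _)
  let Hmap : ContinuousMap.Homotopy (j.comp fmap)
      (ContinuousMap.id (normalComplement A H)) :=
    { toFun := fun p => ⟨q + ((((1 - (p.1 : ℝ)) * s (p.2 : Fin n → ℂ) + (p.1 : ℝ)) : ℝ) : ℂ) •
        ((p.2 : Fin n → ℂ) - q), hmemH p.2 p.2.2 _ (hcombo p.1 p.2)⟩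
      continuous_toFun := by
        apply Continuous.subtype_mk
        have c1 : Continuous fun p : I × normalComplement A H => (p.1 : ℝ) :=
          continuous_subtype_val.comp continuous_fst
        have c2 : Continuous fun p : I × normalComplement A H => s (p.2 : Fin n → ℂ) :=
          hscont.comp (continuous_subtype_val.comp continuous_snd)
        have c3 : Continuous fun p : I × normalComplement A H =>
            ((1 - (p.1 : ℝ)) * s (p.2 : Fin n → ℂ) + (p.1 : ℝ) : ℝ) :=
          ((continuous_const.sub c1).mul c2).add c1
        exact continuous_const.add
          ((Complex.continuous_ofReal.comp c3).smul
            ((continuous_subtype_val.comp continuous_snd).sub continuous_const))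
      map_zero_left := by
        intro x
        apply Subtype.ext
        rw [ContinuousMap.comp_apply, hj (fmap x)]
        simp [fmap]
      map_one_left := by
        intro x
        apply Subtype.ext
        simp }
  refine ⟨fmap, ⟨Hmap⟩, ?_⟩
  intro y
  exact Stmt12Aux.injective_of_homotopic_comp_id fmap j ⟨Hmap⟩ y
end
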